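/- arXiv:2403.16975 — 2 statements merged into one kernel-verified Lean document; each statement's English description precedes it below -/
import Mathlib

section
/- For all real x, y > 0 and parameters α₂, σ > 0, r > 1 with r + 1 > 2ρ and ρ > 1, there exist constants υ > 2 and L > 0 such that (x - y)(f(x) - f(y)) + ((υ - 1)/2)|g(x) - g(y)|² ≤ L|x - y|², where f(x) = -α₂ x^r and g(x) = σ x^ρ. -/
/-!
For `y ≤ x` the drift contributes at most `-α₂ x^(r-1) (x-y)²`, while by the tangent-line
(Bernoulli) bound the noise contributes at most `σ²ρ² x^(2ρ-2) (x-y)²`. Since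
`2ρ - 2 < r - 1`, the drift power dominates for large `x`, so `σ²ρ² t^(2ρ-2) - α₂ t^(r-1)` is
bounded above on `[0, ∞)`; that bound is `L`, and `υ = 3`.
-/

open Real

theorem rpow_sub_rpow_le_mul_rpow_sub_one_mul {x y p : ℝ} (hx : 0 < x) (hy : 0 ≤ y) (hp : 1 ≤ p) :
    x ^ p - y ^ p ≤ p * x ^ (p - 1) * (x - y) := by
  have hbern := one_add_mul_self_le_rpow_one_add (s := y / x - 1)
    (by linarith [div_nonneg hy hx.le]) hp
  rw [add_sub_cancel, div_rpow hy hx.le, le_div_iff₀ (rpow_pos_of_pos hx p)] at hbern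
  have hexpand : (1 + p * (y / x - 1)) * x ^ p = x ^ p - p * x ^ (p - 1) * (x - y) := by
    rw [rpow_sub_one hx.ne']
    field_simp
    ring
  linarith

theorem rpow_sub_one_mul_sub_le_rpow_sub_rpow {x y r : ℝ} (hy : 0 ≤ y) (hxy : y ≤ x) (hr : 1 ≤ r) :
    x ^ (r - 1) * (x - y) ≤ x ^ r - y ^ r := by
  have hsplit {t : ℝ} (ht : 0 ≤ t) : t ^ r = t ^ (r - 1) * t := by
    rw [← rpow_add_one' ht (by linarith), sub_add_cancel]
  have hmono : y ^ (r - 1) * y ≤ x ^ (r - 1) * y :=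
    mul_le_mul_of_nonneg_right (rpow_le_rpow hy hxy (by linarith)) hy
  rw [hsplit (hy.trans hxy), hsplit hy]
  linarith

theorem exists_mul_rpow_le_mul_rpow_add {k α a b : ℝ} (hk : 0 ≤ k) (hα : 0 < α) (ha : 0 ≤ a)
    (hab : a < b) : ∃ L, 0 < L ∧ ∀ t, 0 ≤ t → k * t ^ a ≤ α * t ^ b + L := by
  -- beyond the threshold `T`, where `α * T ^ (b - a) = k`, the power `t ^ b` dominates
  set T := (k / α) ^ (b - a)⁻¹
  have hT : 0 ≤ T := by positivity
  refine ⟨k * T ^ a + 1, by positivity, fun t ht => ?_⟩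
  rcases le_total t T with htT | hTt
  · have : k * t ^ a ≤ k * T ^ a := by gcongr
    have : 0 ≤ α * t ^ b := by positivity
    linarith
  · have hTpow : T ^ (b - a) = k / α := by
      rw [← rpow_mul (div_nonneg hk hα.le), inv_mul_cancel₀ (sub_ne_zero.2 hab.ne'), rpow_one]
    have hpow : k / α ≤ t ^ (b - a) := hTpow ▸ rpow_le_rpow hT hTt (by linarith)
    have hsplit : t ^ b = t ^ a * t ^ (b - a) := by
      rw [← rpow_add' ht (by linarith), add_sub_cancel]
    have : k * t ^ a ≤ α * t ^ b := by
      rw [hsplit, mul_comm (t ^ a), ← mul_assoc]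
      gcongr
      rwa [← div_le_iff₀' hα]
    have : 0 ≤ k * T ^ a := by positivity
    linarith

theorem monotonicity_of_le {α σ r ρ L x y : ℝ} (hα : 0 ≤ α) (hr : 1 ≤ r) (hρ : 1 ≤ ρ)
    (hy : 0 < y) (hxy : y ≤ x)
    (hgrowth : (σ * ρ) ^ 2 * x ^ (2 * ρ - 2) ≤ α * x ^ (r - 1) + L) :
    (x - y) * ((-α * x ^ r) - (-α * y ^ r)) + (σ * x ^ ρ - σ * y ^ ρ) ^ 2
      ≤ L * (x - y) ^ 2 := by
  have hx : 0 < x := hy.trans_le hxy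
  have hdrift : x ^ (r - 1) * (x - y) ≤ x ^ r - y ^ r :=
    rpow_sub_one_mul_sub_le_rpow_sub_rpow hy.le hxy hr
  have hnoise : (x ^ ρ - y ^ ρ) ^ 2 ≤ ρ ^ 2 * x ^ (2 * ρ - 2) * (x - y) ^ 2 := by
    have hsq : x ^ (2 * ρ - 2) = (x ^ (ρ - 1)) ^ 2 := by
      rw [← rpow_mul_natCast hx.le]; ring_nf
    rw [hsq, ← mul_pow, ← mul_pow]
    gcongr
    · exact sub_nonneg.2 (rpow_le_rpow hy.le hxy (by linarith))
    · exact rpow_sub_rpow_le_mul_rpow_sub_one_mul hx hy.le hρ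
  calc (x - y) * ((-α * x ^ r) - (-α * y ^ r)) + (σ * x ^ ρ - σ * y ^ ρ) ^ 2
      = σ ^ 2 * (x ^ ρ - y ^ ρ) ^ 2 - α * (x - y) * (x ^ r - y ^ r) := by ring
    _ ≤ σ ^ 2 * (ρ ^ 2 * x ^ (2 * ρ - 2) * (x - y) ^ 2)
          - α * (x - y) * (x ^ (r - 1) * (x - y)) := by gcongr
    _ = ((σ * ρ) ^ 2 * x ^ (2 * ρ - 2) - α * x ^ (r - 1)) * (x - y) ^ 2 := by ring
    _ ≤ L * (x - y) ^ 2 := by gcongr; linarith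

theorem monotonicity_noncritical_general
    (α₂ σ r ρ : ℝ) (hα₂ : 0 < α₂) (hρ : 1 < ρ)
    (hnc : r + 1 > 2 * ρ) :
    ∃ υ : ℝ, 2 < υ ∧ ∃ L : ℝ, 0 < L ∧ ∀ x y : ℝ, 0 < x → 0 < y →
      (x - y) * ((-α₂ * x ^ r) - (-α₂ * y ^ r))
        + (υ - 1) / 2 * |σ * x ^ ρ - σ * y ^ ρ| ^ 2 ≤ L * |x - y| ^ 2 := by
  obtain ⟨L, hL, hgrowth⟩ := exists_mul_rpow_le_mul_rpow_add (sq_nonneg (σ * ρ)) hα₂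
    (a := 2 * ρ - 2) (b := r - 1) (by linarith) (by linarith)
  refine ⟨3, by norm_num, L, hL, fun x y hx hy => ?_⟩
  rw [sq_abs, sq_abs, show ((3 : ℝ) - 1) / 2 = 1 by norm_num, one_mul]
  wlog hxy : y ≤ x generalizing x y
  · linarith [this y x hy hx (le_of_not_ge hxy)]
  exact monotonicity_of_le hα₂.le (by linarith) hρ.le hy hxy (hgrowth x hx.le)

theorem monotonicity_noncritical
    (α₂ σ r ρ : ℝ) (hα₂ : 0 < α₂) (hσ : 0 < σ) (hr : 1 < r) (hρ : 1 < ρ)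
    (hnc : r + 1 > 2 * ρ) :
    ∃ υ : ℝ, 2 < υ ∧ ∃ L : ℝ, 0 < L ∧ ∀ x y : ℝ, 0 < x → 0 < y →
      (x - y) * ((-α₂ * x ^ r) - (-α₂ * y ^ r))
        + (υ - 1) / 2 * |σ * x ^ ρ - σ * y ^ ρ| ^ 2 ≤ L * |x - y| ^ 2 :=
  monotonicity_noncritical_general α₂ σ r ρ hα₂ hρ hnc
end

section
/- For all real x, y > 0 and parameters α₂, σ > 0, r > 1 with r + 1 = 2ρ and α₂/σ² > (1/8)(r + 2 + 1/r), there exist constants υ > 2 and L > 0 such that (x - y)(f(x) - f(y)) + ((υ - 1)/2)|g(x) - g(y)|² ≤ L|x - y|², where f(x) = -α₂ x^r and g(x) = σ x^ρ. -/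
/-!
Put `r = 2ρ - 1`. Since `x ^ ρ - y ^ ρ = ∫_y^x ρ t ^ (ρ - 1) dt`, the Cauchy–Schwarz inequality gives
`r (x ^ ρ - y ^ ρ) ^ 2 ≤ ρ ^ 2 (x - y) (x ^ r - y ^ r)`, i.e. the diffusion term is controlled by the
monotone drift term. Hence `υ = 1 + 2 α₂ r / (σ ^ 2 ρ ^ 2)` makes the left-hand side nonpositive,
so any `L > 0` works; and `υ > 2` is exactly the critical condition, because
`(r + 2 + 1 / r) / 8 = ρ ^ 2 / (2 r)`.
-/

open intervalIntegral MeasureTheory Set Real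

theorem sq_intervalIntegral_le_mul_intervalIntegral_sq {f : ℝ → ℝ} {a b : ℝ}
    (hf : IntervalIntegrable f volume a b)
    (hf2 : IntervalIntegrable (fun t ↦ f t ^ 2) volume a b) :
    (∫ t in a..b, f t) ^ 2 ≤ (b - a) * ∫ t in a..b, f t ^ 2 := by
  wlog hab : a ≤ b generalizing a b
  · have := this hf.symm hf2.symm (le_of_not_ge hab)
    rw [integral_symm a b, integral_symm a b] at this
    linarith
  set I := ∫ t in a..b, f t
  set J := ∫ t in a..b, f t ^ 2
  -- nonnegativity of the variance of `f` on `[a, b]`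
  have hvar : 0 ≤ ∫ t in a..b, ((b - a) * f t - I) ^ 2 :=
    integral_nonneg hab fun t _ ↦ sq_nonneg _
  have hexpand : ∫ t in a..b, ((b - a) * f t - I) ^ 2 = (b - a) * ((b - a) * J - I ^ 2) := by
    have hsplit : ∫ t in a..b, ((b - a) * f t - I) ^ 2
        = ∫ t in a..b, ((b - a) ^ 2 * f t ^ 2 - 2 * (b - a) * I * f t) + I ^ 2 := by
      congr 1; ext t; ring
    rw [hsplit, integral_add ((hf2.const_mul _).sub (hf.const_mul _)) intervalIntegrable_const,
      integral_sub (hf2.const_mul _) (hf.const_mul _), intervalIntegral.integral_const_mul,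
      intervalIntegral.integral_const_mul, intervalIntegral.integral_const, smul_eq_mul]
    ring
  rcases hab.eq_or_lt with rfl | hlt
  · simp [I]
  · nlinarith

theorem sq_rpow_sub_rpow_le {ρ x y : ℝ} (hρ : 1 / 2 < ρ) (hx : 0 < x) (hy : 0 < y) :
    (2 * ρ - 1) * (x ^ ρ - y ^ ρ) ^ 2 ≤ ρ ^ 2 * (x - y) * (x ^ (2 * ρ - 1) - y ^ (2 * ρ - 1)) := by
  have hpos : ∀ t ∈ uIcc y x, 0 < t := fun t ht ↦ lt_of_lt_of_le (lt_min hy hx) ht.1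
  have h0 : (0 : ℝ) ∉ uIcc y x := fun h ↦ (hpos 0 h).false
  have hr : 0 < 2 * ρ - 1 := by linarith
  have hcont : ContinuousOn (fun t ↦ ρ * t ^ (ρ - 1)) (uIcc y x) :=
    continuousOn_const.mul (continuousOn_id.rpow_const fun t ht ↦ Or.inl (hpos t ht).ne')
  have hint : ∫ t in y..x, ρ * t ^ (ρ - 1) = x ^ ρ - y ^ ρ := by
    rw [intervalIntegral.integral_const_mul, integral_rpow (Or.inr ⟨by linarith, h0⟩),
      sub_add_cancel]
    field_simp
  have hint2 : ∫ t in y..x, (ρ * t ^ (ρ - 1)) ^ 2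
      = ρ ^ 2 * (x ^ (2 * ρ - 1) - y ^ (2 * ρ - 1)) / (2 * ρ - 1) := by
    rw [integral_congr (g := fun t ↦ ρ ^ 2 * t ^ (2 * ρ - 2)) fun t ht ↦ by
      simp only [mul_pow, ← rpow_natCast, ← rpow_mul (hpos t ht).le]; ring_nf,
      intervalIntegral.integral_const_mul, integral_rpow (Or.inr ⟨by linarith, h0⟩)]
    ring_nf
  have hcs := sq_intervalIntegral_le_mul_intervalIntegral_sq hcont.intervalIntegrable
    (hcont.pow 2).intervalIntegrable
  rw [hint, hint2, mul_div_assoc', le_div_iff₀ hr] at hcs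
  linarith

theorem drift_diffusion_monotonicity_nonpos {α₂ σ ρ υ x y : ℝ} (hα₂ : 0 ≤ α₂) (hρ : 1 / 2 < ρ)
    (hυ : (υ - 1) * σ ^ 2 * ρ ^ 2 ≤ 2 * α₂ * (2 * ρ - 1)) (hx : 0 < x) (hy : 0 < y) :
    (x - y) * ((-α₂ * x ^ (2 * ρ - 1)) - (-α₂ * y ^ (2 * ρ - 1)))
      + (υ - 1) / 2 * |σ * x ^ ρ - σ * y ^ ρ| ^ 2 ≤ 0 := by
  have hdrift := mul_le_mul_of_nonneg_left (sq_rpow_sub_rpow_le hρ hx hy) hα₂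
  have hdiffusion := mul_le_mul_of_nonneg_right hυ (sq_nonneg (x ^ ρ - y ^ ρ))
  rw [sq_abs]
  refine nonpos_of_mul_nonpos_right ?_ (by positivity : 0 < ρ ^ 2)
  linear_combination hdrift + hdiffusion / 2

theorem monotonicity_critical_general
    (α₂ σ r ρ : ℝ) (hα₂ : 0 < α₂) (hσ : 0 < σ) (hρ : 1 < ρ)
    (hc : r + 1 = 2 * ρ) (hratio : α₂ / σ ^ 2 > (1 / 8) * (r + 2 + 1 / r)) :
    ∃ υ : ℝ, 2 < υ ∧ ∃ L : ℝ, 0 < L ∧ ∀ x y : ℝ, 0 < x → 0 < y →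
      (x - y) * ((-α₂ * x ^ r) - (-α₂ * y ^ r))
        + (υ - 1) / 2 * |σ * x ^ ρ - σ * y ^ ρ| ^ 2 ≤ L * |x - y| ^ 2 := by
  obtain rfl : r = 2 * ρ - 1 := by linarith
  have hr : 0 < 2 * ρ - 1 := by linarith
  have hσρ : 0 < σ ^ 2 * ρ ^ 2 := by positivity
  have hcrit : σ ^ 2 * ρ ^ 2 < 2 * α₂ * (2 * ρ - 1) := by
    have hthreshold : (1 / 8) * (2 * ρ - 1 + 2 + 1 / (2 * ρ - 1)) = ρ ^ 2 / (2 * (2 * ρ - 1)) := by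
      field_simp; ring
    rw [hthreshold, gt_iff_lt, div_lt_div_iff₀ (by positivity) (by positivity)] at hratio
    linarith
  refine ⟨1 + 2 * α₂ * (2 * ρ - 1) / (σ ^ 2 * ρ ^ 2), ?_, 1, one_pos, fun x y hx hy ↦ ?_⟩
  · linarith [(one_lt_div hσρ).2 hcrit]
  · refine (drift_diffusion_monotonicity_nonpos hα₂.le (by linarith) ?_ hx hy).trans
      (by positivity)
    rw [add_sub_cancel_left, mul_assoc, div_mul_cancel₀ _ hσρ.ne']

theorem monotonicity_critical
    (α₂ σ r ρ : ℝ) (hα₂ : 0 < α₂) (hσ : 0 < σ) (hr : 1 < r) (hρ : 1 < ρ)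
    (hc : r + 1 = 2 * ρ) (hratio : α₂ / σ ^ 2 > (1 / 8) * (r + 2 + 1 / r)) :
    ∃ υ : ℝ, 2 < υ ∧ ∃ L : ℝ, 0 < L ∧ ∀ x y : ℝ, 0 < x → 0 < y →
      (x - y) * ((-α₂ * x ^ r) - (-α₂ * y ^ r))
        + (υ - 1) / 2 * |σ * x ^ ρ - σ * y ^ ρ| ^ 2 ≤ L * |x - y| ^ 2 :=
  monotonicity_critical_general α₂ σ r ρ hα₂ hσ hρ hc hratio
end
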